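/- arXiv:1810.10132 — 5 statements merged into one kernel-verified Lean document; each statement's English description precedes it below -/
import Mathlib

section
/- Let m, β > 0 with βm > 4, set α = 1/(√(βm) − 2), and let ε ≥ 0. Suppose sequences (x_t) and (v_t) in R^d satisfy (βm/2)‖x_t − v_t‖² ≤ (1/2)‖x_t − x_{t−1}‖² for all t ≥ 1, ‖v_t − v_{t−1}‖ ≤ ε for all t ≥ 1, and x_0 = v_0. Then ‖x_t − v_t‖ ≤ α·ε for all t. -/
theorem stmt_3 (d : ℕ) (m β ε α : ℝ) (hm : 0 < m) (hβ : 0 < β)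
    (hβm : 4 < β * m) (hα : α = 1 / (Real.sqrt (β * m) - 2)) (hε : 0 ≤ ε)
    (x v : ℕ → EuclideanSpace ℝ (Fin d))
    (hbal : ∀ t : ℕ, 1 ≤ t → β * m / 2 * ‖x t - v t‖ ^ 2 ≤ 1 / 2 * ‖x t - x (t - 1)‖ ^ 2)
    (hsmooth : ∀ t : ℕ, 1 ≤ t → ‖v t - v (t - 1)‖ ≤ ε)
    (h0 : x 0 = v 0) :
    ∀ t : ℕ, ‖x t - v t‖ ≤ α * ε := by
  set s := Real.sqrt (β * m) with hsdef
  have hβm0 : (0:ℝ) ≤ β * m := by positivity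
  have hs2 : s ^ 2 = β * m := Real.sq_sqrt hβm0
  have hs : 2 < s := by
    have : (2:ℝ) = Real.sqrt 4 := by
      rw [show (4:ℝ) = 2^2 by norm_num, Real.sqrt_sq (by norm_num)]
    rw [this]
    exact Real.sqrt_lt_sqrt (by norm_num) hβm
  have hαpos : 0 < α := by
    rw [hα]; exact div_pos one_pos (by linarith)
  have hαs : α * (s - 1) = 1 + α := by
    have h1 : α * (s - 2) = 1 := by
      rw [hα, div_mul_eq_mul_div, one_mul, div_self (by linarith)]
    nlinarith
  intro t
  induction t with
  | zero => simp [h0]; positivity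
  | succ n ih =>
    have hn1 : 1 ≤ n + 1 := by omega
    have hb := hbal (n+1) hn1
    have hv := hsmooth (n+1) hn1
    simp only [Nat.add_sub_cancel] at hb hv
    -- s * ‖x (n+1) - v (n+1)‖ ≤ ‖x (n+1) - x n‖
    have hkey : s * ‖x (n+1) - v (n+1)‖ ≤ ‖x (n+1) - x n‖ := by
      have hsq : (s * ‖x (n+1) - v (n+1)‖) ^ 2 ≤ ‖x (n+1) - x n‖ ^ 2 := by
        rw [mul_pow, hs2]; nlinarith
      have h1 : 0 ≤ s * ‖x (n+1) - v (n+1)‖ := by positivity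
      nlinarith [norm_nonneg (x (n+1) - x n)]
    have htri : ‖x (n+1) - x n‖ ≤ ‖x (n+1) - v (n+1)‖ + ‖v (n+1) - v n‖ + ‖v n - x n‖ := by
      have e : x (n+1) - x n = (x (n+1) - v (n+1)) + (v (n+1) - v n) + (v n - x n) := by abel
      rw [e]
      exact le_trans (norm_add_le _ _)
        (by linarith [norm_add_le (x (n+1) - v (n+1)) (v (n+1) - v n)])
    have hvn : ‖v n - x n‖ ≤ α * ε := by rw [norm_sub_rev]; exact ih
    nlinarith [norm_nonneg (x (n+1) - v (n+1))]
end

section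
/- Under the hypotheses of the previous accuracy bound (βm > 4, α = 1/(√(βm) − 2), (βm/2)‖x_t − v_t‖² ≤ (1/2)‖x_t − x_{t−1}‖², ‖v_t − v_{t−1}‖ ≤ ε, x_0 = v_0), the points picked satisfy ‖x_t − x_{t−1}‖ ≤ (1 + 2α)·ε for all t ≥ 1. -/
theorem stmt_4 (d : ℕ) (m β ε α : ℝ) (hm : 0 < m) (hβ : 0 < β)
    (hβm : 4 < β * m) (hα : α = 1 / (Real.sqrt (β * m) - 2)) (hε : 0 ≤ ε)
    (x v : ℕ → EuclideanSpace ℝ (Fin d))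
    (hbal : ∀ t : ℕ, 1 ≤ t → β * m / 2 * ‖x t - v t‖ ^ 2 ≤ 1 / 2 * ‖x t - x (t - 1)‖ ^ 2)
    (hsmooth : ∀ t : ℕ, 1 ≤ t → ‖v t - v (t - 1)‖ ≤ ε)
    (h0 : x 0 = v 0) :
    ∀ t : ℕ, 1 ≤ t → ‖x t - x (t - 1)‖ ≤ (1 + 2 * α) * ε := by
  set s := Real.sqrt (β * m) with hs
  have hβm0 : (0:ℝ) ≤ β * m := by positivity
  have hs2 : (2:ℝ) < s := by
    have h4 : Real.sqrt 4 = 2 := by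
      rw [show (4:ℝ) = 2^2 by norm_num, Real.sqrt_sq (by norm_num : (0:ℝ) ≤ 2)]
    have := Real.sqrt_lt_sqrt (by norm_num : (0:ℝ) ≤ 4) hβm
    rw [h4] at this; exact this
  have hssq : s ^ 2 = β * m := Real.sq_sqrt hβm0
  have hαs : α * (s - 2) = 1 := by
    rw [hα, one_div, inv_mul_cancel₀ (ne_of_gt (by linarith : (0:ℝ) < s - 2))]
  have hαpos : 0 < α := by rw [hα]; exact one_div_pos.mpr (by linarith)
  have key : ∀ t : ℕ, ‖x t - v t‖ ≤ (1 + 2 * α) * ε / s ∧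
      (1 ≤ t → ‖x t - x (t - 1)‖ ≤ (1 + 2 * α) * ε) := by
    intro t
    induction t with
    | zero =>
      constructor
      · rw [h0, sub_self, norm_zero]; positivity
      · intro h; omega
    | succ t ih =>
      have hp : ‖x t - v t‖ ≤ (1 + 2 * α) * ε / s := ih.1
      have hb := hbal (t + 1) (by omega)
      have hsm := hsmooth (t + 1) (by omega)
      simp only [Nat.add_sub_cancel] at hb hsm ⊢
      set n := ‖x (t + 1) - v (t + 1)‖ with hn
      set a := ‖x (t + 1) - x t‖ with ha
      set p := ‖x t - v t‖ with hpn
      have hn0 : 0 ≤ n := norm_nonneg _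
      have ha0 : 0 ≤ a := norm_nonneg _
      have hp0 : 0 ≤ p := norm_nonneg _
      have h1 : s * n ≤ a := by nlinarith [sq_nonneg (a - s * n), sq_nonneg (a + s * n)]
      have h2 : a ≤ n + ε + p := by
        have := dist_triangle4 (x (t + 1)) (v (t + 1)) (v t) (x t)
        simp only [dist_eq_norm] at this
        calc a ≤ ‖x (t+1) - v (t+1)‖ + ‖v (t+1) - v t‖ + ‖v t - x t‖ := this
          _ = n + ‖v (t+1) - v t‖ + p := by rw [norm_sub_rev (v t) (x t)]
          _ ≤ n + ε + p := by linarith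
      have hps : s * p ≤ (1 + 2 * α) * ε := by
        rw [div_eq_mul_inv] at hp
        calc s * p ≤ s * ((1 + 2 * α) * ε * s⁻¹) := by
              exact mul_le_mul_of_nonneg_left hp (by linarith)
          _ = (1 + 2 * α) * ε := by field_simp
      have haB : a ≤ (1 + 2 * α) * ε := by
        -- a * s ≤ s*n + s*ε + s*p ≤ a + s*ε + (1+2α)ε, so a*(s-1) ≤ (s+1+2α)ε = (1+2α)(s-1)ε
        nlinarith [mul_le_mul_of_nonneg_left h2 (le_of_lt (by linarith : (0:ℝ) < s))]
      refine ⟨?_, fun _ => haB⟩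
      rw [le_div_iff₀ (by linarith : (0:ℝ) < s)]
      calc n * s = s * n := mul_comm _ _
        _ ≤ a := h1
        _ ≤ (1 + 2 * α) * ε := haB
  intro t ht
  exact (key t).2 ht
end

section
/- Let f_1, …, f_T : R^d → R be differentiable and m-strongly convex with minimizers v_1, …, v_T, in the sense that ∇f_t(x)·(x − v_t) ≥ m‖x − v_t‖² for all x. Let x_1*, …, x_T* minimize Σ_t [f_t(x_t) + (1/2)‖x_t − x_{t−1}‖²] with x_0* fixed equal to v_0 := x_0. Then Σ_{t=1}^T ‖x_t* − v_t‖ ≤ (2/m) Σ_{t=1}^T ‖v_t − v_{t−1}‖. -/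
/-!
Write `aₜ = ‖xₜ* - vₜ‖` and `δₜ = ‖vₜ - vₜ₋₁‖`. The first-order condition expresses `∇fₜ(xₜ*)` as
`(xₜ₋₁* - xₜ*) + (xₜ₊₁* - xₜ*)`; pairing it with `xₜ* - vₜ`, strong convexity and Cauchy–Schwarz give
`m aₜ ≤ (aₜ₋₁ - aₜ + δₜ) + (aₜ₊₁ - aₜ + δₜ₊₁)`, without the second bracket at `t = T`.
Summed over `t`, the `a`-terms telescope to `a₀ - a₁ ≤ 0`, and every `δₜ` occurs at most twice.
-/

open Finset

section InnerProductSpace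

variable {E : Type*} [NormedAddCommGroup E] [InnerProductSpace ℝ E]

theorem real_inner_sub_le_norm_mul (x y v w : E) :
    inner ℝ (y - x) (x - v) ≤ ‖x - v‖ * (‖y - w‖ - ‖x - v‖ + ‖w - v‖) := by
  have hsplit : y - x = (y - w) + (w - v) - (x - v) := by abel
  rw [hsplit, inner_sub_left, inner_add_left, real_inner_self_eq_norm_sq]
  nlinarith [real_inner_le_norm (y - w) (x - v), real_inner_le_norm (w - v) (x - v)]

theorem mul_norm_sub_le_of_strongly_monotone_of_first_order {m : ℝ} {g x xm xp v vm vp : E}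
    (hsc : m * ‖x - v‖ ^ 2 ≤ inner ℝ g (x - v)) (hfoc : g + (x - xm) + (x - xp) = 0) :
    m * ‖x - v‖ ≤ (‖xm - vm‖ - ‖x - v‖ + ‖v - vm‖) + (‖xp - vp‖ - ‖x - v‖ + ‖vp - v‖) := by
  have hg : g = (xm - x) + (xp - x) := by
    rw [← sub_eq_zero, ← hfoc]; abel
  have hle : ‖x - v‖ * (m * ‖x - v‖) ≤
      ‖x - v‖ * ((‖xm - vm‖ - ‖x - v‖ + ‖v - vm‖) + (‖xp - vp‖ - ‖x - v‖ + ‖vp - v‖)) := by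
    have := norm_sub_rev vm v ▸ real_inner_sub_le_norm_mul x xm v vm
    have := real_inner_sub_le_norm_mul x xp v vp
    rw [hg, inner_add_left] at hsc
    nlinarith
  rcases (norm_nonneg (x - v)).eq_or_lt with hzero | hpos
  · rw [← hzero, mul_zero, sub_zero, sub_zero]
    positivity
  · exact le_of_mul_le_mul_left hle hpos

end InnerProductSpace

theorem mul_sum_Icc_le_two_mul_sum_Icc {a δ : ℕ → ℝ} {m : ℝ} {T : ℕ} (hT : 1 ≤ T)
    (ha0 : a 0 = 0) (ha1 : 0 ≤ a 1) (hδ1 : 0 ≤ δ 1)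
    (hstep : ∀ t, 1 ≤ t → t < T →
      m * a t ≤ (a (t - 1) - a t + δ t) + (a (t + 1) - a t + δ (t + 1)))
    (hlast : m * a T ≤ a (T - 1) - a T + δ T) :
    m * ∑ t ∈ Icc 1 T, a t ≤ 2 * ∑ t ∈ Icc 1 T, δ t := by
  obtain ⟨N, rfl⟩ := Nat.exists_eq_add_of_le' hT
  have hIcc (f : ℕ → ℝ) : ∑ t ∈ Icc 1 (N + 1), f t = ∑ i ∈ range (N + 1), f (i + 1) := by
    rw [← Ico_add_one_right_eq_Icc, sum_Ico_eq_sum_range]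
    simp only [Nat.add_sub_cancel, add_comm 1]
  have hsteps : ∑ i ∈ range N, m * a (i + 1) ≤
      ∑ i ∈ range N, ((a i - a (i + 1)) + (a (i + 2) - a (i + 1)) + δ (i + 1) + δ (i + 2)) := by
    refine sum_le_sum fun i hi => ?_
    have := hstep (i + 1) (by omega) (by simp only [mem_range] at hi; omega)
    simp only [Nat.add_sub_cancel] at this
    linarith
  simp only [sum_add_distrib, sum_range_sub', sum_range_sub (fun i => a (i + 1))] at hsteps
  simp only [Nat.add_sub_cancel] at hlast
  have hδlast := sum_range_succ (fun i => δ (i + 1)) N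
  have hδfirst := sum_range_succ' (fun i => δ (i + 1)) N
  rw [hIcc, hIcc, sum_range_succ, mul_add, mul_sum]
  simp only [zero_add] at hsteps hδfirst
  linarith

/-- Offline movement lemma: the offline optimal points, satisfying the first-order
conditions of the smoothed objective, stay close to the per-round minimizers. -/
theorem stmt_6 (d T : ℕ) (hT : 1 ≤ T) (m : ℝ) (hm : 0 < m)
    (g : ℕ → EuclideanSpace ℝ (Fin d) → EuclideanSpace ℝ (Fin d))  -- gradients of the fₜ
    (v xstar : ℕ → EuclideanSpace ℝ (Fin d))
    (hsc : ∀ t, 1 ≤ t → t ≤ T → ∀ x, m * ‖x - v t‖ ^ 2 ≤ (inner ℝ (g t x) (x - v t) : ℝ))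
    (h0 : xstar 0 = v 0)
    (hfoc : ∀ t, 1 ≤ t → t < T →
      g t (xstar t) + (xstar t - xstar (t - 1)) + (xstar t - xstar (t + 1)) = 0)
    (hfocT : g T (xstar T) + (xstar T - xstar (T - 1)) = 0) :
    ∑ t ∈ Finset.Icc 1 T, ‖xstar t - v t‖ ≤
      (2 / m) * ∑ t ∈ Finset.Icc 1 T, ‖v t - v (t - 1)‖ := by
  have hmain : m * ∑ t ∈ Icc 1 T, ‖xstar t - v t‖ ≤ 2 * ∑ t ∈ Icc 1 T, ‖v t - v (t - 1)‖ := by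
    refine mul_sum_Icc_le_two_mul_sum_Icc hT (by simp [h0]) (norm_nonneg _) (norm_nonneg _)
      (fun t ht1 htT => ?_) ?_
    · simpa only [Nat.add_sub_cancel] using
        mul_norm_sub_le_of_strongly_monotone_of_first_order (vm := v (t - 1)) (vp := v (t + 1))
          (hsc t ht1 htT.le _) (hfoc t ht1 htT)
    · have hfocT' : g T (xstar T) + (xstar T - xstar (T - 1)) + (xstar T - xstar T) = 0 := by
        rw [sub_self, add_zero, hfocT]
      simpa only [sub_self, norm_zero, add_zero] using
        mul_norm_sub_le_of_strongly_monotone_of_first_order (vm := v (T - 1)) (vp := v T)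
          (hsc T hT le_rfl _) hfocT'
  rw [div_mul_eq_mul_div, le_div_iff₀ hm, mul_comm]
  exact hmain
end

section
/- Suppose the offline optimal points satisfy the first-order condition ∇f_t(x_t*) + 2x_t* − x_{t−1}* − x_{t+1}* = 0, f_t is strongly convex with ∇f_t(x)·(x − v_t) ≥ m‖x − v_t‖², and set δ_t = ‖x_t* − v_t‖, ε_t = ‖v_t − v_{t−1}‖. Then δ_t(δ_{t−1} + δ_{t+1} + ε_t + ε_{t+1}) ≥ (m + 2)δ_t². -/
/-!
Write `u = x_t* − v_t`. The first-order condition says `∇f_t(x_t*) = w − 2u` with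
`w = (x_{t−1}* − v_{t−1}) + (x_{t+1}* − v_{t+1}) + (v_{t−1} − v_t) + (v_{t+1} − v_t)`,
so strong convexity at `x_t*` gives `(m + 2)‖u‖² ≤ ⟪w, u⟫`, and Cauchy–Schwarz with the
triangle inequality bounds `⟪w, u⟫` by `‖u‖` times the sum of the four norms.
-/

open RealInnerProductSpace

section InnerProduct

variable {E : Type*} [NormedAddCommGroup E] [InnerProductSpace ℝ E]

lemma real_inner_add_add_add_le (a b c e u : E) :
    ⟪a + b + c + e, u⟫ ≤ (‖a‖ + ‖b‖ + ‖c‖ + ‖e‖) * ‖u‖ :=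
  (real_inner_le_norm _ _).trans <|
    mul_le_mul_of_nonneg_right norm_add₄_le (norm_nonneg u)

lemma add_two_mul_norm_sq_le_inner {m : ℝ} {w u : E}
    (h : m * ‖u‖ ^ 2 ≤ ⟪w - (2 : ℝ) • u, u⟫) : (m + 2) * ‖u‖ ^ 2 ≤ ⟪w, u⟫ := by
  rw [inner_sub_left, real_inner_smul_left, real_inner_self_eq_norm_sq] at h
  linarith

end InnerProduct

theorem stmt_7_general (d : ℕ) (m : ℝ) (t : ℕ)
    (g : EuclideanSpace ℝ (Fin d) → EuclideanSpace ℝ (Fin d))  -- gradient of fₜ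
    (v xstar : ℕ → EuclideanSpace ℝ (Fin d))
    (hsc : ∀ x, m * ‖x - v t‖ ^ 2 ≤ (inner ℝ (g x) (x - v t) : ℝ))
    (hfoc : g (xstar t) + (2 : ℝ) • xstar t - xstar (t - 1) - xstar (t + 1) = 0) :
    (m + 2) * ‖xstar t - v t‖ ^ 2 ≤
      ‖xstar t - v t‖ * (‖xstar (t - 1) - v (t - 1)‖ + ‖xstar (t + 1) - v (t + 1)‖ +
        ‖v t - v (t - 1)‖ + ‖v (t + 1) - v t‖) := by
  set u := xstar t - v t
  set w := (xstar (t - 1) - v (t - 1)) + (xstar (t + 1) - v (t + 1)) +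
    (v (t - 1) - v t) + (v (t + 1) - v t)
  have hgrad : g (xstar t) = w - (2 : ℝ) • u := by
    linear_combination (norm := module) hfoc
  calc (m + 2) * ‖u‖ ^ 2 ≤ ⟪w, u⟫ := add_two_mul_norm_sq_le_inner (hgrad ▸ hsc (xstar t))
    _ ≤ _ := real_inner_add_add_add_le _ _ _ _ u
    _ = _ := by rw [norm_sub_rev (v (t - 1)), mul_comm]

theorem stmt_7 (d : ℕ) (m : ℝ) (hm : 0 < m) (t : ℕ) (ht : 1 ≤ t)
    (g : EuclideanSpace ℝ (Fin d) → EuclideanSpace ℝ (Fin d))  -- gradient of fₜ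
    (v xstar : ℕ → EuclideanSpace ℝ (Fin d))
    (hsc : ∀ x, m * ‖x - v t‖ ^ 2 ≤ (inner ℝ (g x) (x - v t) : ℝ))
    (hfoc : g (xstar t) + (2 : ℝ) • xstar t - xstar (t - 1) - xstar (t + 1) = 0) :
    (m + 2) * ‖xstar t - v t‖ ^ 2 ≤
      ‖xstar t - v t‖ * (‖xstar (t - 1) - v (t - 1)‖ + ‖xstar (t + 1) - v (t + 1)‖ +
        ‖v t - v (t - 1)‖ + ‖v (t + 1) - v t‖) :=
  stmt_7_general d m t g v xstar hsc hfoc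
end

section
/- Let H_t, M_t, H_t*, M_t* be nonnegative reals for t = 1…T, and let φ_t ≥ 0 with φ_0 = 0. Suppose M_t = β·H_t for all t, and for every t: H_t + M_t + (φ_t − φ_{t−1}) ≤ (1 + β + 12η/m)·H_t* + 2η·M_t* + (4η/m)·H_{t−1} (with H_0 = 0). If 4η/(m(1+β)) < 1, then Σ_t (H_t + M_t) ≤ [max(1 + β + 12η/m, 2η) / (1 − 4η/(m(1+β)))] · Σ_t (H_t* + M_t*). -/
theorem stmt_8 (T : ℕ) (m β η : ℝ) (hm : 0 < m) (hβ : 0 < β) (hη : 0 < η)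
    (H M Hs Ms φ : ℕ → ℝ)
    (hH : ∀ t ∈ Finset.Icc 1 T, 0 ≤ H t) (hM : ∀ t ∈ Finset.Icc 1 T, 0 ≤ M t)
    (hHs : ∀ t ∈ Finset.Icc 1 T, 0 ≤ Hs t) (hMs : ∀ t ∈ Finset.Icc 1 T, 0 ≤ Ms t)
    (hφ : ∀ t, 0 ≤ φ t) (hφ0 : φ 0 = 0) (hH0 : H 0 = 0)
    (hbal : ∀ t ∈ Finset.Icc 1 T, M t = β * H t)
    (hstep : ∀ t ∈ Finset.Icc 1 T,
      H t + M t + (φ t - φ (t - 1)) ≤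
        (1 + β + 12 * η / m) * Hs t + 2 * η * Ms t + (4 * η / m) * H (t - 1))
    (hsmall : 4 * η / (m * (1 + β)) < 1) :
    ∑ t ∈ Finset.Icc 1 T, (H t + M t) ≤
      (max (1 + β + 12 * η / m) (2 * η) / (1 - 4 * η / (m * (1 + β)))) *
        ∑ t ∈ Finset.Icc 1 T, (Hs t + Ms t) := by
  set C := max (1 + β + 12 * η / m) (2 * η) with hCdef
  set k := 4 * η / (m * (1 + β)) with hkdef
  have h1β : (0:ℝ) < 1 + β := by linarith
  have hk : 1 - k > 0 := by linarith
  set S := ∑ t ∈ Finset.Icc 1 T, (H t + M t) with hSdef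
  set Ss := ∑ t ∈ Finset.Icc 1 T, (Hs t + Ms t) with hSsdef
  -- telescoping
  have tele : ∀ N : ℕ, ∑ t ∈ Finset.Icc 1 N, (φ t - φ (t-1)) = φ N - φ 0 := by
    intro N
    induction N with
    | zero => simp
    | succ n ih =>
      rw [Finset.sum_Icc_succ_top (Nat.succ_le_succ (Nat.zero_le n)), ih]
      simp
  have shift : ∀ N : ℕ, ∑ t ∈ Finset.Icc 1 N, H (t-1) + H N
      = ∑ t ∈ Finset.Icc 1 N, H t + H 0 := by
    intro N
    induction N with
    | zero => simp
    | succ n ih =>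
      rw [Finset.sum_Icc_succ_top (Nat.succ_le_succ (Nat.zero_le n)),
        Finset.sum_Icc_succ_top (Nat.succ_le_succ (Nat.zero_le n))]
      simp only [Nat.succ_sub_one]
      linarith
  have hHT : 0 ≤ H T := by
    rcases Nat.eq_zero_or_pos T with h | h
    · rw [h, hH0]
    · exact hH T (Finset.mem_Icc.mpr ⟨h, le_refl T⟩)
  have hsumH : ∑ t ∈ Finset.Icc 1 T, H t = S / (1 + β) := by
    rw [hSdef, Finset.sum_div]
    refine Finset.sum_congr rfl ?_
    intro t ht
    rw [hbal t ht]
    field_simp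
  have key := Finset.sum_le_sum hstep
  rw [Finset.sum_add_distrib, Finset.sum_add_distrib, Finset.sum_add_distrib,
    Finset.sum_add_distrib, ← Finset.mul_sum, ← Finset.mul_sum, ← Finset.mul_sum,
    tele T, hφ0] at key
  have hS' : ∑ t ∈ Finset.Icc 1 T, H t + ∑ t ∈ Finset.Icc 1 T, M t = S := by
    rw [hSdef, Finset.sum_add_distrib]
  -- key : S + (φ T - 0) ≤ (1+β+12η/m) * ΣHs + 2η * ΣMs + (4η/m) * Σ H (t-1)
  have hshift : ∑ t ∈ Finset.Icc 1 T, H (t-1) ≤ S / (1 + β) := by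
    have := shift T
    rw [hH0, hsumH] at this
    linarith
  have hCS : (1 + β + 12 * η / m) * (∑ t ∈ Finset.Icc 1 T, Hs t)
      + 2 * η * (∑ t ∈ Finset.Icc 1 T, Ms t) ≤ C * Ss := by
    have hterm : ∀ t ∈ Finset.Icc 1 T,
        (1 + β + 12 * η / m) * Hs t + 2 * η * Ms t ≤ C * (Hs t + Ms t) := by
      intro t ht
      have h1 : (1 + β + 12 * η / m) * Hs t ≤ C * Hs t :=
        mul_le_mul_of_nonneg_right (le_max_left _ _) (hHs t ht)
      have h2 : 2 * η * Ms t ≤ C * Ms t :=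
        mul_le_mul_of_nonneg_right (le_max_right _ _) (hMs t ht)
      calc (1 + β + 12 * η / m) * Hs t + 2 * η * Ms t ≤ C * Hs t + C * Ms t := by linarith
        _ = C * (Hs t + Ms t) := by ring
    calc (1 + β + 12 * η / m) * (∑ t ∈ Finset.Icc 1 T, Hs t)
          + 2 * η * (∑ t ∈ Finset.Icc 1 T, Ms t)
        = ∑ t ∈ Finset.Icc 1 T, ((1 + β + 12 * η / m) * Hs t + 2 * η * Ms t) := by
          rw [Finset.mul_sum, Finset.mul_sum, Finset.sum_add_distrib]
      _ ≤ ∑ t ∈ Finset.Icc 1 T, C * (Hs t + Ms t) := Finset.sum_le_sum hterm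
      _ = C * Ss := by rw [hSsdef, Finset.mul_sum]
  have hηm : 0 ≤ 4 * η / m := by positivity
  have hkS : (4 * η / m) * (∑ t ∈ Finset.Icc 1 T, H (t-1)) ≤ k * S := by
    have hSnn : 0 ≤ S := by
      refine Finset.sum_nonneg ?_
      intro t ht; have := hH t ht; have := hM t ht; linarith
    have h1 : (4 * η / m) * (∑ t ∈ Finset.Icc 1 T, H (t-1))
        ≤ (4 * η / m) * (S / (1 + β)) := mul_le_mul_of_nonneg_left hshift hηm
    have h2 : (4 * η / m) * (S / (1 + β)) = k * S := by
      rw [hkdef]; field_simp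
    linarith
  have hφT := hφ T
  have main : (1 - k) * S ≤ C * Ss := by nlinarith
  rw [div_mul_eq_mul_div, le_div_iff₀ hk]
  nlinarith
end
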